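/- arXiv:2205.11834 — 2 statements merged into one kernel-verified Lean document; each statement's English description precedes it below -/
import Mathlib

section
/- In the jump-to-ruin model, the replication strategy of the vulnerable put by the stock and the vanilla put is explicitly $\zeta_t = -\frac{\mathcal{N}(-d_+(t,S_t))}{1 - \mathcal{N}(-d_-(t,S_t))}$ (units of stock) and $\eta_t = -\frac{\mathcal{N}(-d_-(t,S_t))}{1 - \mathcal{N}(-d_-(t,S_t))}$ (units of vanilla put): these solve, for each $t < \nu \wedge T$, the linear system $\partial_S w - \zeta - \eta\, \partial_S v = 0$ and $-w + \zeta S + \eta(v - K) = 0$, where $w(t,S) = v(t,S) - K(1 - e^{-\lambda(T-t)})$ is the vulnerable put pricing function and $v$ the vanilla put pricing function. -/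
open MeasureTheory ProbabilityTheory

/-- Standard normal cumulative distribution function. -/
noncomputable def normalCDF (x : ℝ) : ℝ :=
  ((gaussianReal 0 1) (Set.Iic x)).toReal

/-- `d_± = (ln(S/K) + λ(T-t))/(σ √(T-t)) ± σ √(T-t)/2`. -/
noncomputable def dPlusMinus (sign : ℝ) (T K lam sigma t S : ℝ) : ℝ :=
  (Real.log (S / K) + lam * (T - t)) / (sigma * Real.sqrt (T - t))
    + sign * (sigma * Real.sqrt (T - t) / 2)

lemma normalCDF_lt_one (x : ℝ) : normalCDF x < 1 := by
  have h0 : gaussianReal 0 1 (Set.Ioi x) ≠ 0 := by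
    intro h
    have := (gaussianReal_absolutelyContinuous' 0 one_ne_zero) h
    simp [Real.volume_Ioi] at this
  have hsum : gaussianReal 0 1 (Set.Iic x) + gaussianReal 0 1 (Set.Ioi x) = 1 := by
    have := measure_add_measure_compl (μ := gaussianReal 0 1) (measurableSet_Iic (a := x))
    simpa [Set.compl_Iic] using this
  have hle : gaussianReal 0 1 (Set.Iic x) ≤ 1 := prob_le_one
  have hlt : gaussianReal 0 1 (Set.Iic x) < 1 := by
    rcases hle.lt_or_eq with h | h
    · exact h
    · exfalso
      rw [h] at hsum
      apply h0
      simpa using (ENNReal.add_right_inj ENNReal.one_ne_top).mp (by simpa using hsum)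
  have := (ENNReal.toReal_lt_toReal (measure_ne_top _ _) ENNReal.one_ne_top).mpr hlt
  simpa [normalCDF] using this

/-- explicit replication of the vulnerable put in the jump-to-ruin model.
With `v(t,S) = K e^{-λ(T-t)} 𝒩(-d₋) - S 𝒩(-d₊) + K(1 - e^{-λ(T-t)})` the vanilla put
pricing function (so `∂_S v = -𝒩(-d₊)`), `w = v - K(1 - e^{-λ(T-t)})` the vulnerable put
pricing function (so `∂_S w = ∂_S v`), the hedge ratios
`ζ = -𝒩(-d₊)/(1 - 𝒩(-d₋))` (stock) and `η = -𝒩(-d₋)/(1 - 𝒩(-d₋))` (vanilla put) solve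
the delta-matching and jump-matching equations
`∂_S w - ζ - η ∂_S v = 0` and `-w + ζ S + η (v - K) = 0`. -/
theorem jr_vulnerable_put_replication
    (T K lam sigma t S : ℝ)
    (hK : 0 < K) (hlam : 0 < lam) (hsigma : 0 < sigma) (htT : t < T) (hS : 0 < S)
    (v w dv dw ζ η : ℝ)
    (hv : v = K * Real.exp (-lam * (T - t))
        * normalCDF (-(dPlusMinus (-1) T K lam sigma t S))
      - S * normalCDF (-(dPlusMinus 1 T K lam sigma t S))
      + K * (1 - Real.exp (-lam * (T - t))))
    (hw : w = v - K * (1 - Real.exp (-lam * (T - t))))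
    (hdv : dv = -(normalCDF (-(dPlusMinus 1 T K lam sigma t S))))
    (hdw : dw = dv)
    (hζ : ζ = -(normalCDF (-(dPlusMinus 1 T K lam sigma t S)))
      / (1 - normalCDF (-(dPlusMinus (-1) T K lam sigma t S))))
    (hη : η = -(normalCDF (-(dPlusMinus (-1) T K lam sigma t S)))
      / (1 - normalCDF (-(dPlusMinus (-1) T K lam sigma t S)))) :
    dw - ζ - η * dv = 0 ∧ -w + ζ * S + η * (v - K) = 0 := by
  subst hv hw hdv hdw hζ hη
  set A := normalCDF (-(dPlusMinus 1 T K lam sigma t S)) with hA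
  set B := normalCDF (-(dPlusMinus (-1) T K lam sigma t S)) with hB
  have hD : 1 - B ≠ 0 := by
    have := normalCDF_lt_one (-(dPlusMinus (-1) T K lam sigma t S))
    rw [← hB] at this
    linarith
  constructor
  · field_simp
    ring
  · field_simp
    ring
end

section
/- In the static hedging of the vulnerable put in the jump-to-ruin model, the raw pnl is $pnl^d_t = -\mathbf{1}_{\{\nu \le t\}}\mathbf{1}_{\{\nu \le T\}} K$ and the HVA is $\mathrm{HVA}^d_t = \mathbf{1}_{\{t < \nu\}} K (1 - e^{-\lambda(T-t)})$; in particular the compensated loss satisfies $d(pnl^d - \mathrm{HVA}^d)_t = K \mathbf{1}_{\{t \le \nu \wedge T\}} e^{-\lambda(T-t)} (\lambda\,dt - \delta_\nu(dt))$, whose integral is a martingale. -/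
open MeasureTheory

/-! Before `T` the hedged position only loses the default payment `K` at `ν`, so
`pnl^d - (HVA^d - HVA^d_0) = K e^{-λT} (e^{λt} 1_{t<ν} - 1)`, and `e^{λt} 1_{t<ν}` is a martingale
because the conditional survival probability `P(ν > t | ℱ_s)` is `1_{s<ν} e^{-λ(t-s)}`. -/

theorem static_hedge_pnl_eq {v t T K lam q p : ℝ} (ht : t ≤ T)
    (hpq : t < T → p - q = (if t < v then (1 : ℝ) else 0) * (K * (1 - Real.exp (-lam * (T - t))))
      + (if v ≤ t then (1 : ℝ) else 0) * K)
    (hvanish : T ≤ t → q = 0 ∧ p = 0) :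
    -(if v ≤ T then (1 : ℝ) else 0) * K * (if T ≤ t then (1 : ℝ) else 0)
      + (if v ≤ t then (1 : ℝ) else 0) * (q - p)
      = -((if v ≤ t then (1 : ℝ) else 0) * (if v ≤ T then (1 : ℝ) else 0) * K) := by
  rcases ht.lt_or_eq with hlt | rfl
  · have hpq := hpq hlt
    by_cases hv : v ≤ t
    · simp only [hv, hv.trans ht, not_le.2 hlt, not_lt.2 hv, if_true, if_false] at hpq ⊢
      linarith
    · simp only [hv, not_le.2 hlt, if_false]
      ring
  · obtain ⟨rfl, rfl⟩ := hvanish le_rfl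
    by_cases hv : v ≤ t <;> simp [hv]

theorem static_hedge_hva_eq {v t T K lam q p : ℝ} (ht : t ≤ T)
    (hpq : t < T → p - q = (if t < v then (1 : ℝ) else 0) * (K * (1 - Real.exp (-lam * (T - t))))
      + (if v ≤ t then (1 : ℝ) else 0) * K)
    (hvanish : T ≤ t → q = 0 ∧ p = 0) :
    (if t < v then (1 : ℝ) else 0) * (p - q)
      = (if t < v then (1 : ℝ) else 0) * (K * (1 - Real.exp (-lam * (T - t)))) := by
  rcases ht.lt_or_eq with hlt | rfl
  · rw [hpq hlt]
    by_cases hv : t < v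
    · simp [hv, not_le.2 hv]
    · simp [hv]
  · obtain ⟨rfl, rfl⟩ := hvanish le_rfl
    simp

theorem compensated_loss_eq {v r T K lam : ℝ} (hv : 0 < v) (hrT : r ≤ T) :
    -((if v ≤ r then (1 : ℝ) else 0) * (if v ≤ T then (1 : ℝ) else 0) * K)
      - ((if r < v then (1 : ℝ) else 0) * (K * (1 - Real.exp (-lam * (T - r))))
        - (if 0 < v then (1 : ℝ) else 0) * (K * (1 - Real.exp (-lam * (T - 0)))))
      = K * Real.exp (-lam * T) * (Real.exp (lam * r) * (if r < v then (1 : ℝ) else 0) - 1) := by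
  have hexp : Real.exp (-lam * (T - r)) = Real.exp (-lam * T) * Real.exp (lam * r) := by
    rw [← Real.exp_add]; ring_nf
  by_cases hvr : v ≤ r
  · simp only [hvr, hvr.trans hrT, hv, not_lt.2 hvr, if_true, if_false, sub_zero]
    ring
  · simp only [hvr, not_le.1 hvr, hv, if_true, if_false, sub_zero, hexp]
    ring

theorem condExp_exp_mul_survival_sub_one {Ω : Type*} {m0 : MeasurableSpace Ω} {μ : Measure Ω}
    [IsFiniteMeasure μ] {m : MeasurableSpace Ω} (hm : m ≤ m0) {ν : Ω → ℝ} (hν : Measurable[m0] ν)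
    {lam s t : ℝ}
    (hsurv : μ[fun ω => if t < ν ω then (1 : ℝ) else 0 | m]
      =ᵐ[μ] fun ω => (if s < ν ω then (1 : ℝ) else 0) * Real.exp (-lam * (t - s)))
    (c : ℝ) :
    μ[fun ω => c * (Real.exp (lam * t) * (if t < ν ω then (1 : ℝ) else 0) - 1) | m]
      =ᵐ[μ] fun ω => c * (Real.exp (lam * s) * (if s < ν ω then (1 : ℝ) else 0) - 1) := by
  set surv : Ω → ℝ := fun ω => if t < ν ω then (1 : ℝ) else 0
  have hint : Integrable surv μ := by
    have : surv = {ω | t < ν ω}.indicator fun _ => (1 : ℝ) := by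
      funext ω; simp [surv, Set.indicator_apply]
    rw [this]
    exact (integrable_const 1).indicator (hν measurableSet_Ioi)
  have hsplit : (fun ω => c * (Real.exp (lam * t) * surv ω - 1))
      = (c * Real.exp (lam * t)) • surv - fun _ => c := by
    funext ω; simp only [Pi.sub_apply, Pi.smul_apply, smul_eq_mul]; ring
  have hexp : Real.exp (lam * t) * Real.exp (-lam * (t - s)) = Real.exp (lam * s) := by
    rw [← Real.exp_add]; ring_nf
  rw [hsplit]
  refine (condExp_sub (hint.smul _) (integrable_const c) m).trans ?_
  rw [condExp_const hm]
  filter_upwards [condExp_smul (c * Real.exp (lam * t)) surv m, hsurv] with ω hsmul hω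
  simp only [Pi.sub_apply, hsmul, Pi.smul_apply, smul_eq_mul, hω]
  rw [← hexp]
  ring

theorem static_hedge_pnl_hva_martingale_general
    {Ω : Type*} {m0 : MeasurableSpace Ω} {μ : Measure Ω} [IsProbabilityMeasure μ]
    (ℱ : Filtration ℝ m0)
    (ν : Ω → ℝ) (hνpos : ∀ ω, 0 < ν ω)
    (lam K T : ℝ) (hT : 0 < T)
    -- ν is adapted and has the exponential(λ) memoryless conditional survival law
    (hνadapted : ∀ t : ℝ, MeasurableSet[ℱ t] {ω | ν ω ≤ t})
    (hsurv : ∀ t u : ℝ, t ≤ u →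
      μ[fun ω => if u < ν ω then (1 : ℝ) else 0 | ℱ t]
        =ᵐ[μ] fun ω => (if t < ν ω then (1 : ℝ) else 0) * Real.exp (-lam * (u - t)))
    (Q P pnl HVA : ℝ → Ω → ℝ)
    -- vulnerable and vanilla put fair values
    (hQP : ∀ t : ℝ, t < T → ∀ ω, P t ω - Q t ω =
      (if t < ν ω then (1 : ℝ) else 0) * (K * (1 - Real.exp (-lam * (T - t))))
      + (if ν ω ≤ t then (1 : ℝ) else 0) * K)
    (hvanish : ∀ t : ℝ, T ≤ t → ∀ ω, Q t ω = 0 ∧ P t ω = 0)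
    -- raw pnl and HVA of the statically hedged vulnerable put
    (hpnl : ∀ t ω, pnl t ω =
      -(if ν ω ≤ T then (1 : ℝ) else 0) * K * (if T ≤ t then (1 : ℝ) else 0)
      + (if ν ω ≤ t then (1 : ℝ) else 0) * (Q t ω - P t ω))
    (hHVA : ∀ t ω, HVA t ω = (if t < ν ω then (1 : ℝ) else 0) * (P t ω - Q t ω)) :
    -- closed forms of the raw pnl and of the HVA
    (∀ t : ℝ, t ≤ T → ∀ ω,
      pnl t ω = -((if ν ω ≤ t then (1 : ℝ) else 0) * (if ν ω ≤ T then (1 : ℝ) else 0) * K))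
    ∧ (∀ t : ℝ, t ≤ T → ∀ ω,
      HVA t ω = (if t < ν ω then (1 : ℝ) else 0) * (K * (1 - Real.exp (-lam * (T - t)))))
    -- the compensated loss pnl - HVA_{(0)} is a martingale
    ∧ (∀ s t : ℝ, 0 ≤ s → s ≤ t → t ≤ T →
        μ[fun ω => pnl t ω - (HVA t ω - HVA 0 ω) | ℱ s]
          =ᵐ[μ] fun ω => pnl s ω - (HVA s ω - HVA 0 ω)) := by
  have hpnl_eq : ∀ t ≤ T, ∀ ω, pnl t ω = _ := fun t ht ω => (hpnl t ω).trans
    (static_hedge_pnl_eq ht (hQP t · ω) (hvanish t · ω))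
  have hHVA_eq : ∀ t ≤ T, ∀ ω, HVA t ω = _ := fun t ht ω => (hHVA t ω).trans
    (static_hedge_hva_eq ht (hQP t · ω) (hvanish t · ω))
  refine ⟨hpnl_eq, hHVA_eq, fun s t _ hst htT => ?_⟩
  have hν : Measurable ν := measurable_of_Iic fun r => ℱ.le r _ (hνadapted r)
  have hloss : ∀ r ≤ T, (fun ω => pnl r ω - (HVA r ω - HVA 0 ω)) = fun ω =>
      K * Real.exp (-lam * T) * (Real.exp (lam * r) * (if r < ν ω then (1 : ℝ) else 0) - 1) :=
    fun r hr => funext fun ω => by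
      rw [hpnl_eq r hr, hHVA_eq r hr, hHVA_eq 0 hT.le]
      exact compensated_loss_eq (hνpos ω) hr
  rw [hloss t htT, hloss s (hst.trans htT)]
  exact condExp_exp_mul_survival_sub_one (ℱ.le s) hν (hsurv s t hst) _

/-- static hedging of the vulnerable put in the jump-to-ruin model. With
`pnl_t = -1_{ν ≤ T} K 1_{[T,∞)}(t) + 1_{ν ≤ t}(Q_t - P_t)` and `HVA_t = 1_{t<ν}(P_t - Q_t)`,
where `P - Q = 1_{t<ν} K (1 - e^{-λ(T-t)}) + 1_{ν ≤ t} K` before `T` and `P, Q` vanish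
from `T` on, one has `pnl_t = -1_{ν ≤ t} 1_{ν ≤ T} K`,
`HVA_t = 1_{t < ν} K (1 - e^{-λ(T-t)})` for `t ≤ T`, and the compensated loss
`X_t = pnl_t - (HVA_t - HVA_0)` (equal to
`K ∫_0^{t ∧ ν ∧ T} λ e^{-λ(T-s)} ds - K e^{-λ(T-ν)} 1_{ν ≤ t ∧ T}`) is a martingale. -/
theorem static_hedge_pnl_hva_martingale
    {Ω : Type*} {m0 : MeasurableSpace Ω} {μ : Measure Ω} [IsProbabilityMeasure μ]
    (ℱ : Filtration ℝ m0)
    (ν : Ω → ℝ) (hνpos : ∀ ω, 0 < ν ω)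
    (lam K T : ℝ) (hlam : 0 < lam) (hK : 0 < K) (hT : 0 < T)
    -- ν is adapted and has the exponential(λ) memoryless conditional survival law
    (hνadapted : ∀ t : ℝ, MeasurableSet[ℱ t] {ω | ν ω ≤ t})
    (hsurv : ∀ t u : ℝ, t ≤ u →
      μ[fun ω => if u < ν ω then (1 : ℝ) else 0 | ℱ t]
        =ᵐ[μ] fun ω => (if t < ν ω then (1 : ℝ) else 0) * Real.exp (-lam * (u - t)))
    (Q P pnl HVA : ℝ → Ω → ℝ)
    -- vulnerable and vanilla put fair values
    (hQP : ∀ t : ℝ, t < T → ∀ ω, P t ω - Q t ω =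
      (if t < ν ω then (1 : ℝ) else 0) * (K * (1 - Real.exp (-lam * (T - t))))
      + (if ν ω ≤ t then (1 : ℝ) else 0) * K)
    (hvanish : ∀ t : ℝ, T ≤ t → ∀ ω, Q t ω = 0 ∧ P t ω = 0)
    -- raw pnl and HVA of the statically hedged vulnerable put
    (hpnl : ∀ t ω, pnl t ω =
      -(if ν ω ≤ T then (1 : ℝ) else 0) * K * (if T ≤ t then (1 : ℝ) else 0)
      + (if ν ω ≤ t then (1 : ℝ) else 0) * (Q t ω - P t ω))
    (hHVA : ∀ t ω, HVA t ω = (if t < ν ω then (1 : ℝ) else 0) * (P t ω - Q t ω)) :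
    -- closed forms of the raw pnl and of the HVA
    (∀ t : ℝ, t ≤ T → ∀ ω,
      pnl t ω = -((if ν ω ≤ t then (1 : ℝ) else 0) * (if ν ω ≤ T then (1 : ℝ) else 0) * K))
    ∧ (∀ t : ℝ, t ≤ T → ∀ ω,
      HVA t ω = (if t < ν ω then (1 : ℝ) else 0) * (K * (1 - Real.exp (-lam * (T - t)))))
    -- the compensated loss pnl - HVA_{(0)} is a martingale
    ∧ (∀ s t : ℝ, 0 ≤ s → s ≤ t → t ≤ T →
        μ[fun ω => pnl t ω - (HVA t ω - HVA 0 ω) | ℱ s]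
          =ᵐ[μ] fun ω => pnl s ω - (HVA s ω - HVA 0 ω)) :=
  static_hedge_pnl_hva_martingale_general ℱ ν hνpos lam K T hT hνadapted hsurv Q P pnl HVA hQP
    hvanish hpnl hHVA
end
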